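/- Let k be a field, U a symmetric n × n matrix with entries in K_∞ = k((t^{-1})), and a, b, s integers with b > 0 and s ≥ 0. Let ν(a,b) denote the k-dimension of the space of x ∈ k[t]^n with |x| < 2^a and ‖Ux‖ < 2^{-b}, where ‖y‖ denotes the absolute value of the fractional (negative-degree) part of y, extended to vectors by the maximum. Then ν(a,b) ≤ ν(a-s, b+s) + ns + n·max(⌊(a-b)/2⌋, 0). -/

import Mathlib

/- Geometry of numbers over `K∞ = k((t⁻¹))`, modelled as formal Laurent series in the
variable `X = t⁻¹`.  Under this identification `ord(f) = -(f.order)`, the absolute value is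
`|f| = 2^(ord f)`, and `k[t]` embeds via `t ↦ X⁻¹`, with `ord` of a polynomial equal to its
degree. -/

open scoped Classical

noncomputable section

variable {k : Type*} [Field k]

/-- The element `t` of `K∞ = k((t⁻¹))`. -/
def tvar (k : Type*) [Field k] : LaurentSeries k := HahnSeries.single (-1 : ℤ) 1

/-- The embedding `k[t] → K∞`. -/
def polyEmb (k : Type*) [Field k] : Polynomial k →+* LaurentSeries k :=
  (Polynomial.aeval (tvar k)).toRingHom

variable {n : ℕ}

/-- The (full) `k[t]`-lattice spanned by the vectors `x 0, …, x (n-1)` in `K∞ⁿ`. -/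
def lattice (x : Fin n → Fin n → LaurentSeries k) : Set (Fin n → LaurentSeries k) :=
  {v | ∃ u : Fin n → Polynomial k, v = ∑ i, polyEmb k (u i) • x i}

/-- `k(t)`-linear independence of vectors in `K∞ⁿ`, phrased (equivalently, by clearing
denominators) via polynomial relations. -/
def PolyIndep (x : Fin n → Fin n → LaurentSeries k) : Prop :=
  ∀ u : Fin n → Polynomial k, ∑ i, polyEmb k (u i) • x i = 0 → ∀ i, u i = 0

/-- `|w| < 2^R` for a vector `w ∈ K∞ⁿ`, where `|w| = max_j 2^(ord (w j))`. -/
def NormLt (w : Fin n → LaurentSeries k) (R : ℤ) : Prop :=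
  ∀ j, w j = 0 ∨ -R < (w j).order

/-- Membership of `w` in the `k(t)`-span of the vectors `x j`, `j ∈ s` (phrased by clearing
denominators). -/
def InRatSpan (x : Fin n → Fin n → LaurentSeries k) (s : Set (Fin n))
    (w : Fin n → LaurentSeries k) : Prop :=
  ∃ q : Polynomial k, q ≠ 0 ∧ ∃ u : Fin n → Polynomial k,
    polyEmb k q • w = ∑ i, if i ∈ s then polyEmb k (u i) • x i else 0

/-- `σ 0 ≤ … ≤ σ (n-1)` are the successive minima of the lattice spanned by `x`:
there are lattice vectors `v i` with `|v i| = 2^(σ i)`, each `v i` outside the `k(t)`-span of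
the previous ones, such that every lattice vector outside the span of `v 0, …, v (i-1)` has
absolute value at least `2^(σ i)`. -/
def AreSuccessiveMinima (x : Fin n → Fin n → LaurentSeries k) (σ : Fin n → ℤ) : Prop :=
  Monotone σ ∧
  ∃ v : Fin n → Fin n → LaurentSeries k,
    (∀ i, v i ∈ lattice x) ∧
    (∀ i, ¬ InRatSpan v {j | j < i} (v i)) ∧
    (∀ i, NormLt (v i) (σ i + 1) ∧ ¬ NormLt (v i) (σ i)) ∧
    (∀ i, ∀ w ∈ lattice x, ¬ InRatSpan v {j | j < i} w → ¬ NormLt w (σ i))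

/-- The space of `x ∈ k[t]ⁿ` with `|x| < 2^a` and `‖U x‖ < 2^(-b)`, where `‖y‖` is the absolute
value of the fractional part of `y` (so `‖y‖ < 2^(-b)` means that the coefficients of
`t^(-1), …, t^(-b)`, i.e. the `X`-coefficients in degrees `1, …, b`, all vanish), extended to
vectors by taking the maximum. -/
def shrinkSet (U : Matrix (Fin n) (Fin n) (LaurentSeries k)) (a b : ℤ) :
    Set (Fin n → Polynomial k) :=
  {x | (∀ i, ∀ j : ℕ, a ≤ (j : ℤ) → (x i).coeff j = 0) ∧
       (∀ i, ∀ j : ℤ, 1 ≤ j → j ≤ b → (∑ l, U i l * polyEmb k (x l)).coeff j = 0)}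

/- Passing from `(a, b)` to `(a - 1, b + 1)` imposes `2n` linear conditions on `x`: the
coefficient of `t^(a-1)` in each `x i` and that of `t^(-b-1)` in each `(U x) i` must vanish.
When `a ≤ b + 1`, these conditions cost at most `n` dimensions: for `x, y` in the space, the
coefficient of `t^(a-b-2)` in `xᵀ U y` is `Σ_i x_{i,a-1} (U y)_{i,-b-1}`, so the symmetry of `U`
makes the image of the space under the `2n` conditions isotropic for the standard symplectic form
on `kⁿ × kⁿ`. Of the `s` steps, only those with `a - j ≥ b + j + 2`, at most `⌊(a-b)/2⌋` many, cost
the full `2n`. -/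

open Matrix

universe u

theorem rank_le_rank_add_rank_map {K : Type*} {V V₂ : Type u} [DivisionRing K] [AddCommGroup V]
    [Module K V] [AddCommGroup V₂] [Module K V₂] (f : V →ₗ[K] V₂) {W W' : Submodule K V}
    (h : ∀ x ∈ W, f x = 0 → x ∈ W') :
    Module.rank K W ≤ Module.rank K W' + Module.rank K (W.map f) := by
  rw [← (f.domRestrict W).rank_range_add_rank_ker, LinearMap.range_domRestrict, add_comm]
  refine add_le_add_left (LinearMap.rank_le_of_injective
    ((W.subtype.comp (LinearMap.ker (f.domRestrict W)).subtype).codRestrict W'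
      fun x => h _ x.1.2 x.2) ?_) _
  exact (LinearMap.injective_codRestrict_iff _).mpr
    (Subtype.val_injective.comp Subtype.val_injective)

theorem LinearMap.BilinForm.two_mul_finrank_le_of_le_orthogonal {K V : Type*} [Field K]
    [AddCommGroup V] [Module K V] [FiniteDimensional K V] {B : LinearMap.BilinForm K V}
    (hB : B.Nondegenerate) {W : Submodule K V} (hW : W ≤ B.orthogonal W) :
    2 * Module.finrank K W ≤ Module.finrank K V := by
  have := Submodule.finrank_mono hW
  rw [LinearMap.BilinForm.finrank_orthogonal hB] at this
  have := Submodule.finrank_le W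
  omega

theorem dotProduct_mulVec_comm {R : Type*} [CommSemiring R] {U : Matrix (Fin n) (Fin n) R}
    (hU : U.IsSymm) (v w : Fin n → R) : v ⬝ᵥ (U *ᵥ w) = w ⬝ᵥ (U *ᵥ v) := by
  rw [dotProduct_mulVec, dotProduct_comm, ← vecMul_transpose, hU.eq]

def symplecticForm (k : Type*) [Field k] (n : ℕ) :
    LinearMap.BilinForm k ((Fin n → k) × (Fin n → k)) :=
  (dotProductBilin k k).compl₁₂ (LinearMap.fst k _ _) (LinearMap.snd k _ _) -
    (dotProductBilin k k).compl₁₂ (LinearMap.snd k _ _) (LinearMap.fst k _ _)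

theorem symplecticForm_apply (u v : (Fin n → k) × (Fin n → k)) :
    symplecticForm k n u v = u.1 ⬝ᵥ v.2 - u.2 ⬝ᵥ v.1 := rfl

theorem symplecticForm_nondegenerate : (symplecticForm k n).Nondegenerate := by
  refine ⟨fun u hu => ?_, fun v hv => ?_⟩ <;> ext i
  · simpa [symplecticForm_apply] using hu (0, Pi.single i 1)
  · simpa [symplecticForm_apply] using hu (Pi.single i 1, 0)
  · simpa [symplecticForm_apply] using hv (0, Pi.single i 1)
  · simpa [symplecticForm_apply] using hv (Pi.single i 1, 0)

theorem polyEmb_C (c : k) : polyEmb k (Polynomial.C c) = HahnSeries.single 0 c := by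
  simp [polyEmb, HahnSeries.algebraMap_apply']

theorem polyEmb_monomial (e : ℕ) (c : k) :
    polyEmb k (Polynomial.monomial e c) = HahnSeries.single (-(e : ℤ)) c := by
  rw [← Polynomial.C_mul_X_pow_eq_monomial, map_mul, map_pow, polyEmb_C]
  simp [polyEmb, tvar, HahnSeries.single_pow, HahnSeries.single_mul_single]

theorem polyEmb_smul (c : k) (p : Polynomial k) : polyEmb k (c • p) = c • polyEmb k p := by
  rw [Polynomial.smul_eq_C_mul, map_mul, polyEmb_C, HahnSeries.single_zero_mul_eq_smul]

theorem coeff_polyEmb_mul {m : ℕ} {p : Polynomial k} (hp : p.natDegree ≤ m)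
    (S : LaurentSeries k) (d : ℤ) :
    (polyEmb k p * S).coeff d = ∑ e ∈ Finset.range (m + 1), p.coeff e * S.coeff (d + e) := by
  conv_lhs =>
    rw [p.as_sum_range' (m + 1) (by omega), map_sum, Finset.sum_mul, HahnSeries.coeff_sum]
  refine Finset.sum_congr rfl fun e _ => ?_
  simpa [polyEmb_monomial] using
    HahnSeries.coeff_single_mul_add (r := p.coeff e) (x := S) (a := d + e) (b := -(e : ℤ))

theorem coeff_polyEmb_mul_of_coeff_eq_zero {m : ℕ} {p : Polynomial k} (hp : p.natDegree ≤ m)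
    {S : LaurentSeries k} {d : ℤ} (hS : ∀ e < m, S.coeff (d + e) = 0) :
    (polyEmb k p * S).coeff d = p.coeff m * S.coeff (d + m) := by
  rw [coeff_polyEmb_mul hp, Finset.sum_range_succ, Finset.sum_eq_zero, zero_add]
  intro e he
  rw [hS e (Finset.mem_range.mp he), mul_zero]

def polyMulVec (U : Matrix (Fin n) (Fin n) (LaurentSeries k)) :
    (Fin n → Polynomial k) →ₗ[k] (Fin n → LaurentSeries k) where
  toFun x i := ∑ l, U i l * polyEmb k (x l)
  map_add' x y := by
    ext1 i
    simp [mul_add, Finset.sum_add_distrib]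
  map_smul' c x := by
    ext1 i
    simp only [Pi.smul_apply, RingHom.id_apply, polyEmb_smul,
      ← HahnSeries.single_zero_mul_eq_smul, Finset.mul_sum, mul_left_comm]

theorem polyMulVec_eq_mulVec (U : Matrix (Fin n) (Fin n) (LaurentSeries k))
    (x : Fin n → Polynomial k) : polyMulVec U x = U *ᵥ (polyEmb k ∘ x) := rfl

def shrinkSubmodule (U : Matrix (Fin n) (Fin n) (LaurentSeries k)) (a b : ℤ) :
    Submodule k (Fin n → Polynomial k) where
  carrier := shrinkSet U a b
  zero_mem' := ⟨by simp, fun i j _ _ => by simp⟩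
  add_mem' {x y} hx hy := by
    refine ⟨fun i j hj => by simp [hx.1 i j hj, hy.1 i j hj], fun i j h₁ h₂ => ?_⟩
    have hx' : (polyMulVec U x i).coeff j = 0 := hx.2 i j h₁ h₂
    have hy' : (polyMulVec U y i).coeff j = 0 := hy.2 i j h₁ h₂
    change (polyMulVec U (x + y) i).coeff j = 0
    simp [hx', hy']
  smul_mem' c x hx := by
    refine ⟨fun i j hj => by simp [hx.1 i j hj], fun i j h₁ h₂ => ?_⟩
    have hx' : (polyMulVec U x i).coeff j = 0 := hx.2 i j h₁ h₂
    change (polyMulVec U (c • x) i).coeff j = 0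
    simp [hx']

def topCoeffs (U : Matrix (Fin n) (Fin n) (LaurentSeries k)) (m : ℕ) (d : ℤ) :
    (Fin n → Polynomial k) →ₗ[k] (Fin n → k) × (Fin n → k) :=
  (LinearMap.compLeft (Polynomial.lcoeff k m) (Fin n)).prod
    ((LinearMap.compLeft (HahnSeries.coeff.linearMap d) (Fin n)).comp (polyMulVec U))

theorem topCoeffs_apply (U : Matrix (Fin n) (Fin n) (LaurentSeries k)) (m : ℕ) (d : ℤ)
    (x : Fin n → Polynomial k) :
    topCoeffs U m d x = (fun i => (x i).coeff m, fun i => (polyMulVec U x i).coeff d) := rfl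

section shrinkSubmodule

variable {U : Matrix (Fin n) (Fin n) (LaurentSeries k)} {a b : ℤ} {x y : Fin n → Polynomial k}

theorem natDegree_le_of_mem_shrinkSubmodule (hx : x ∈ shrinkSubmodule U a b) (i : Fin n) :
    (x i).natDegree ≤ (a - 1).toNat :=
  Polynomial.natDegree_le_iff_coeff_eq_zero.mpr fun j hj => hx.1 i j (by omega)

theorem mem_shrinkSubmodule_of_topCoeffs_eq_zero (hx : x ∈ shrinkSubmodule U a b)
    (h : topCoeffs U (a - 1).toNat (b + 1) x = 0) : x ∈ shrinkSubmodule U (a - 1) (b + 1) := by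
  simp only [topCoeffs_apply, Prod.mk_eq_zero, funext_iff] at h
  refine ⟨fun i j hj => ?_, fun i j hj₁ hj₂ => ?_⟩
  · obtain hj | rfl : a ≤ j ∨ j = (a - 1).toNat := by omega
    exacts [hx.1 i j hj, h.1 i]
  · obtain hj | rfl : j ≤ b ∨ j = b + 1 := by omega
    exacts [hx.2 i j hj₁ hj, h.2 i]

theorem coeff_dotProduct_polyMulVec (hab : a ≤ b + 1) (hx : x ∈ shrinkSubmodule U a b)
    (hy : y ∈ shrinkSubmodule U a b) :
    ((polyEmb k ∘ x) ⬝ᵥ polyMulVec U y).coeff (b + 1 - (a - 1).toNat) =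
      (topCoeffs U (a - 1).toNat (b + 1) x).1 ⬝ᵥ (topCoeffs U (a - 1).toNat (b + 1) y).2 := by
  simp only [dotProduct, HahnSeries.coeff_sum, topCoeffs_apply, Function.comp_apply]
  refine Finset.sum_congr rfl fun i _ => ?_
  rw [coeff_polyEmb_mul_of_coeff_eq_zero (S := polyMulVec U y i)
    (natDegree_le_of_mem_shrinkSubmodule hx i) fun e he => hy.2 i _ (by omega) (by omega),
    sub_add_cancel]

theorem symplecticForm_topCoeffs (hU : U.IsSymm) (hab : a ≤ b + 1)
    (hx : x ∈ shrinkSubmodule U a b) (hy : y ∈ shrinkSubmodule U a b) :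
    symplecticForm k n (topCoeffs U (a - 1).toNat (b + 1) x)
      (topCoeffs U (a - 1).toNat (b + 1) y) = 0 := by
  rw [symplecticForm_apply, dotProduct_comm _ (Prod.fst _),
    ← coeff_dotProduct_polyMulVec hab hx hy, ← coeff_dotProduct_polyMulVec hab hy hx,
    polyMulVec_eq_mulVec, polyMulVec_eq_mulVec, dotProduct_mulVec_comm hU, sub_self]

end shrinkSubmodule

section rank

variable (U : Matrix (Fin n) (Fin n) (LaurentSeries k)) (a b : ℤ)

theorem rank_shrinkSubmodule_le_add_rank_map :
    Module.rank k (shrinkSubmodule U a b) ≤ Module.rank k (shrinkSubmodule U (a - 1) (b + 1)) +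
      Module.rank k ((shrinkSubmodule U a b).map (topCoeffs U (a - 1).toNat (b + 1))) :=
  rank_le_rank_add_rank_map _ fun _ hx h => mem_shrinkSubmodule_of_topCoeffs_eq_zero hx h

theorem rank_shrinkSubmodule_le_add_two_mul :
    Module.rank k (shrinkSubmodule U a b) ≤
      Module.rank k (shrinkSubmodule U (a - 1) (b + 1)) + ((2 * n : ℕ) : Cardinal) := by
  refine (rank_shrinkSubmodule_le_add_rank_map U a b).trans (add_le_add_right ?_ _)
  rw [← Module.finrank_eq_rank, Nat.cast_le]
  exact (Submodule.finrank_le _).trans_eq (by simp [two_mul])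

theorem rank_shrinkSubmodule_le_add_of_le (hU : U.IsSymm) (hab : a ≤ b + 1) :
    Module.rank k (shrinkSubmodule U a b) ≤
      Module.rank k (shrinkSubmodule U (a - 1) (b + 1)) + (n : Cardinal) := by
  refine (rank_shrinkSubmodule_le_add_rank_map U a b).trans (add_le_add_right ?_ _)
  rw [← Module.finrank_eq_rank, Nat.cast_le]
  set T := (shrinkSubmodule U a b).map (topCoeffs U (a - 1).toNat (b + 1))
  have hiso : T ≤ (symplecticForm k n).orthogonal T := by
    rintro _ ⟨y, hy, rfl⟩ _ ⟨x, hx, rfl⟩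
    exact symplecticForm_topCoeffs hU hab hx hy
  have := LinearMap.BilinForm.two_mul_finrank_le_of_le_orthogonal
    symplecticForm_nondegenerate hiso
  simp only [Module.finrank_prod, Module.finrank_fin_fun] at this
  omega

theorem rank_shrinkSubmodule_le_iterate (hU : U.IsSymm) (s : ℕ) :
    Module.rank k (shrinkSubmodule U a b) ≤ Module.rank k (shrinkSubmodule U (a - s) (b + s)) +
      ((n * s + n * ((a - b) / 2).toNat : ℕ) : Cardinal) := by
  induction s generalizing a b with
  | zero =>
    rw [Nat.cast_zero, sub_zero, add_zero]
    exact le_self_add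
  | succ s ih =>
    have ih' := ih (a - 1) (b + 1)
    rw [show a - 1 - s = a - (s + 1 : ℕ) by push_cast; ring,
      show b + 1 + s = b + (s + 1 : ℕ) by push_cast; ring] at ih'
    by_cases hab : a ≤ b + 1
    · have ht : ((a - 1 - (b + 1)) / 2).toNat = 0 := by omega
      calc _ ≤ _ := rank_shrinkSubmodule_le_add_of_le U a b hU hab
        _ ≤ _ := add_le_add_left ih' _
        _ ≤ _ := by
          rw [add_assoc, ← Nat.cast_add, ht]
          exact add_le_add_right (Nat.cast_le.mpr (by nlinarith)) _
    · have ht : ((a - 1 - (b + 1)) / 2).toNat + 1 = ((a - b) / 2).toNat := by omega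
      calc _ ≤ _ := rank_shrinkSubmodule_le_add_two_mul U a b
        _ ≤ _ := add_le_add_left ih' _
        _ = _ := by
          rw [add_assoc, ← Nat.cast_add, ← ht]
          ring_nf

end rank

theorem shrinking_lemma_general (U : Matrix (Fin n) (Fin n) (LaurentSeries k)) (hU : U.IsSymm)
    (a b s : ℤ) (hs : 0 ≤ s) :
    ∀ W₁ W₂ : Submodule k (Fin n → Polynomial k),
      (W₁ : Set (Fin n → Polynomial k)) = shrinkSet U a b →
      (W₂ : Set (Fin n → Polynomial k)) = shrinkSet U (a - s) (b + s) →
      Module.rank k W₁ ≤ Module.rank k W₂ +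
        ((n * s.toNat + n * ((a - b) / 2).toNat : ℕ) : Cardinal) := by
  intro W₁ W₂ h₁ h₂
  obtain rfl : W₁ = shrinkSubmodule U a b := SetLike.coe_injective h₁
  obtain rfl : W₂ = shrinkSubmodule U (a - s) (b + s) := SetLike.coe_injective h₂
  lift s to ℕ using hs
  simpa using rank_shrinkSubmodule_le_iterate U a b hU s

/-- **Davenport's shrinking lemma over function fields (Lemma A.4).**
For a symmetric matrix `U` over `K∞` and integers `a`, `b > 0`, `s ≥ 0`:
`ν(a,b) ≤ ν(a-s, b+s) + n·s + n·max(⌊(a-b)/2⌋, 0)`, where `ν(a,b)` is the `k`-dimension of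
the space of `x ∈ k[t]ⁿ` with `|x| < 2^a` and `‖U x‖ < 2^(-b)`. -/
theorem shrinking_lemma (U : Matrix (Fin n) (Fin n) (LaurentSeries k)) (hU : U.IsSymm)
    (a b s : ℤ) (hb : 0 < b) (hs : 0 ≤ s) :
    ∀ W₁ W₂ : Submodule k (Fin n → Polynomial k),
      (W₁ : Set (Fin n → Polynomial k)) = shrinkSet U a b →
      (W₂ : Set (Fin n → Polynomial k)) = shrinkSet U (a - s) (b + s) →
      Module.rank k W₁ ≤ Module.rank k W₂ +
        ((n * s.toNat + n * ((a - b) / 2).toNat : ℕ) : Cardinal) :=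
  shrinking_lemma_general U hU a b s hs

end
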